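/- arXiv:2008.07978 — 5 statements merged into one kernel-verified Lean document; each statement's English description precedes it below -/
import Mathlib

section
/- Fix K ∈ ℕ, Δ > 0, and ε > 0, and set ε₁ = ε/2 and ε₂ = ε/4. Let the threshold noise density be p₁(z) = (ε₁/(2Δ)) exp(−ε₁|z|/Δ) (the Laplace density with mean 0 and scale Δ/ε₁ = 2Δ/ε) and the query noise density be p₂(y) = (ε₂/(2Δ)) exp(−ε₂|y|/Δ) (Laplace with scale Δ/ε₂ = 4Δ/ε), with CDF Φ₂(t) = ∫_{−∞}^t p₂(u) du. For a query vector a = (a₁, …, a_K) ∈ ℝ^K, define the output probabilities P_k(a) = ∫_ℝ (∏_{i=1}^{k−1} Φ₂(z − a_i)) (1 − Φ₂(z − a_k)) p₁(z) dz for k = 1, …, K, and the failure probability Q(a) = ∫_ℝ (∏_{i=1}^{K} Φ₂(z − a_i)) p₁(z) dz. Then for any two query vectors a, b ∈ ℝ^K with |a_i − b_i| ≤ Δ for all i, one has P_k(a) ≤ e^ε P_k(b) for every k ∈ {1, …, K}, and Q(a) ≤ e^ε Q(b). -/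
/-!
Shift the threshold noise by `Δ`, i.e. compare the integrand for `a` at `z` with the integrand
for `b` at `z + Δ`. Since `z - a i ≤ z + Δ - b i`, every "below threshold" factor `Φ₂` can only
grow; the threshold density `p₁` changes by at most `exp (ε₁ Δ / Δ) = exp (ε / 2)`; and the
survival factor `1 - Φ₂` of the answered query sees a shift of at most `2Δ`, which costs at most
`exp (ε₂ · 2Δ / Δ) = exp (ε / 2)`. Translation invariance of Lebesgue measure then turns these
pointwise bounds into bounds on the integrals.
-/

open MeasureTheory Real Set

noncomputable def laplacePDF (c x : ℝ) : ℝ := c / 2 * exp (-c * |x|)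

namespace laplacePDF

variable {c : ℝ}

lemma nonneg (hc : 0 ≤ c) (x : ℝ) : 0 ≤ laplacePDF c x := by
  unfold laplacePDF; positivity

lemma integral_eq_one (hc : 0 < c) : ∫ x, laplacePDF c x = 1 := by
  unfold laplacePDF
  rw [integral_comp_abs (f := fun x => c / 2 * exp (-c * x)), integral_const_mul,
    integral_exp_mul_Ioi (neg_lt_zero.2 hc)]
  field_simp
  simp

lemma integrable (hc : 0 < c) : Integrable (laplacePDF c) :=
  .of_integral_ne_zero (by rw [integral_eq_one hc]; exact one_ne_zero)

lemma le_exp_mul_abs_mul_add (hc : 0 ≤ c) (x d : ℝ) :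
    laplacePDF c x ≤ exp (c * |d|) * laplacePDF c (x + d) := by
  unfold laplacePDF
  rw [mul_left_comm, ← exp_add]
  gcongr
  nlinarith [abs_add_le x d]

end laplacePDF

section Density

variable {p : ℝ → ℝ}

lemma monotone_setIntegral_Iic (hp : Integrable p) (hp0 : ∀ x, 0 ≤ p x) :
    Monotone fun t => ∫ u in Iic t, p u := fun _ _ hst =>
  setIntegral_mono_set hp.integrableOn (.of_forall hp0) (Iic_subset_Iic.2 hst).eventuallyLE

lemma setIntegral_Iic_le_one (hp : Integrable p) (hp0 : ∀ x, 0 ≤ p x) (h1 : ∫ u, p u = 1)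
    (t : ℝ) :
    ∫ u in Iic t, p u ≤ 1 :=
  h1 ▸ setIntegral_le_integral hp (.of_forall hp0)

lemma one_sub_setIntegral_Iic (hp : Integrable p) (h1 : ∫ u, p u = 1) (t : ℝ) :
    1 - ∫ u in Iic t, p u = ∫ u in Ioi t, p u := by
  rw [← h1, ← intervalIntegral.integral_Iic_add_Ioi hp.integrableOn hp.integrableOn,
    add_sub_cancel_left]

lemma setIntegral_Ioi_le_mul_setIntegral_Ioi_add (hp : Integrable p) {C d : ℝ}
    (h : ∀ u, p u ≤ C * p (u + d)) (t : ℝ) :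
    ∫ u in Ioi t, p u ≤ C * ∫ u in Ioi (t + d), p u := by
  have hshift : ∫ u in Ioi (t + d), p u = ∫ u in Ioi t, p (u + d) := by
    rw [← (measurePreserving_add_right volume d).setIntegral_preimage_emb
      (measurableEmbedding_addRight d), preimage_add_const_Ioi, add_sub_cancel_right]
  rw [hshift, ← integral_const_mul]
  exact setIntegral_mono_on hp.integrableOn
    ((hp.comp_add_right d).const_mul C).integrableOn measurableSet_Ioi fun u _ => h u

end Density

noncomputable def laplaceCDF (c t : ℝ) : ℝ := ∫ u in Iic t, laplacePDF c u

namespace laplaceCDF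

variable {c : ℝ}

lemma nonneg (hc : 0 ≤ c) (t : ℝ) : 0 ≤ laplaceCDF c t :=
  setIntegral_nonneg measurableSet_Iic fun u _ => laplacePDF.nonneg hc u

lemma le_one (hc : 0 < c) (t : ℝ) : laplaceCDF c t ≤ 1 :=
  setIntegral_Iic_le_one (laplacePDF.integrable hc) (laplacePDF.nonneg hc.le)
    (laplacePDF.integral_eq_one hc) t

lemma monotone (hc : 0 < c) : Monotone (laplaceCDF c) :=
  monotone_setIntegral_Iic (laplacePDF.integrable hc) (laplacePDF.nonneg hc.le)

lemma one_sub_le_exp_mul_abs_mul_one_sub_add (hc : 0 < c) (t d : ℝ) :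
    1 - laplaceCDF c t ≤ exp (c * |d|) * (1 - laplaceCDF c (t + d)) := by
  simp only [laplaceCDF, one_sub_setIntegral_Iic (laplacePDF.integrable hc)
    (laplacePDF.integral_eq_one hc)]
  exact setIntegral_Ioi_le_mul_setIntegral_Ioi_add (laplacePDF.integrable hc)
    (laplacePDF.le_exp_mul_abs_mul_add hc.le · d) t

end laplaceCDF

section AboveThreshold

variable {ι : Type*} {Φ p : ℝ → ℝ} {Δ : ℝ} {a b : ι → ℝ}

lemma prod_comp_sub_le_prod_comp_add_sub (hΦ : Monotone Φ) (hΦ0 : ∀ t, 0 ≤ Φ t)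
    (hab : ∀ i, |a i - b i| ≤ Δ) (s : Finset ι) (z : ℝ) :
    ∏ i ∈ s, Φ (z - a i) ≤ ∏ i ∈ s, Φ (z + Δ - b i) :=
  Finset.prod_le_prod (fun i _ => hΦ0 _) fun i _ => hΦ (by linarith [(abs_le.1 (hab i)).1])

lemma integral_le_mul_integral_of_le_mul_comp_add {f g : ℝ → ℝ} {C : ℝ} (hf : ∀ z, 0 ≤ f z)
    (hg : Integrable g) (h : ∀ z, f z ≤ C * g (z + Δ)) :
    ∫ z, f z ≤ C * ∫ z, g z := by
  calc ∫ z, f z ≤ ∫ z, C * g (z + Δ) :=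
        integral_mono_of_nonneg (.of_forall hf) ((hg.comp_add_right Δ).const_mul C) (.of_forall h)
    _ = C * ∫ z, g z := by rw [integral_const_mul, integral_add_right_eq_self]

lemma integrable_prod_mul (hΦ : Monotone Φ) (hΦ0 : ∀ t, 0 ≤ Φ t) (hΦ1 : ∀ t, Φ t ≤ 1)
    (hp : Integrable p) (s : Finset ι) (b : ι → ℝ) :
    Integrable fun z => (∏ i ∈ s, Φ (z - b i)) * p z := by
  refine hp.bdd_mul (c := 1) ?_ (.of_forall fun z => ?_)
  · exact (Finset.measurable_prod _ fun i _ => hΦ.measurable.comp (measurable_sub_const _))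
      |>.aestronglyMeasurable
  · rw [norm_of_nonneg (Finset.prod_nonneg fun i _ => hΦ0 _)]
    exact Finset.prod_le_one (fun i _ => hΦ0 _) fun i _ => hΦ1 _

theorem integral_prod_mul_le (hΦ : Monotone Φ) (hΦ0 : ∀ t, 0 ≤ Φ t) (hΦ1 : ∀ t, Φ t ≤ 1)
    (hab : ∀ i, |a i - b i| ≤ Δ) (s : Finset ι) {q r : ℝ → ℝ} {C : ℝ} (hq0 : ∀ z, 0 ≤ q z)
    (hr : Integrable r) (hqr : ∀ z, q z ≤ C * r (z + Δ)) :
    ∫ z, (∏ i ∈ s, Φ (z - a i)) * q z ≤ C * ∫ z, (∏ i ∈ s, Φ (z - b i)) * r z := by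
  refine integral_le_mul_integral_of_le_mul_comp_add (Δ := Δ)
    (fun z => mul_nonneg (Finset.prod_nonneg fun i _ => hΦ0 _) (hq0 z))
    (integrable_prod_mul hΦ hΦ0 hΦ1 hr s b) fun z => ?_
  calc (∏ i ∈ s, Φ (z - a i)) * q z ≤ (∏ i ∈ s, Φ (z + Δ - b i)) * (C * r (z + Δ)) :=
        mul_le_mul (prod_comp_sub_le_prod_comp_add_sub hΦ hΦ0 hab s z) (hqr z) (hq0 z)
          (Finset.prod_nonneg fun i _ => hΦ0 _)
    _ = C * ((∏ i ∈ s, Φ (z + Δ - b i)) * r (z + Δ)) := by ring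

theorem integral_prod_mul_one_sub_mul_le (hΦ : Monotone Φ) (hΦ0 : ∀ t, 0 ≤ Φ t)
    (hΦ1 : ∀ t, Φ t ≤ 1) (hp : Integrable p) (hp0 : ∀ x, 0 ≤ p x) (hab : ∀ i, |a i - b i| ≤ Δ)
    (s : Finset ι) {C₁ C₂ : ℝ} (hpΔ : ∀ z, p z ≤ C₁ * p (z + Δ))
    (hΦΔ : ∀ t d, |d| ≤ 2 * Δ → 1 - Φ t ≤ C₂ * (1 - Φ (t + d))) (k : ι) :
    ∫ z, (∏ i ∈ s, Φ (z - a i)) * (1 - Φ (z - a k)) * p z ≤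
      C₂ * C₁ * ∫ z, (∏ i ∈ s, Φ (z - b i)) * (1 - Φ (z - b k)) * p z := by
  have hΦΔk (z : ℝ) : 1 - Φ (z - a k) ≤ C₂ * (1 - Φ (z + Δ - b k)) := by
    obtain ⟨hlo, hhi⟩ := abs_le.1 (hab k)
    have h := hΦΔ (z - a k) (Δ + a k - b k) (abs_le.2 ⟨by linarith, by linarith⟩)
    rwa [show z - a k + (Δ + a k - b k) = z + Δ - b k by ring] at h
  have hint : Integrable fun z => (1 - Φ (z - b k)) * p z :=
    hp.bdd_mul (c := 1)
      (measurable_const.sub (hΦ.measurable.comp (measurable_sub_const _))).aestronglyMeasurable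
      (.of_forall fun z => by
        rw [norm_of_nonneg (sub_nonneg.2 (hΦ1 _))]; linarith [hΦ0 (z - b k)])
  simp_rw [mul_assoc]
  rw [← mul_assoc C₂]
  refine integral_prod_mul_le hΦ hΦ0 hΦ1 hab s
    (fun z => mul_nonneg (sub_nonneg.2 (hΦ1 _)) (hp0 z)) hint fun z => ?_
  calc (1 - Φ (z - a k)) * p z ≤ C₂ * (1 - Φ (z + Δ - b k)) * (C₁ * p (z + Δ)) :=
        mul_le_mul (hΦΔk z) (hpΔ z) (hp0 z) ((sub_nonneg.2 (hΦ1 _)).trans (hΦΔk z))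
    _ = C₂ * C₁ * ((1 - Φ (z + Δ - b k)) * p (z + Δ)) := by ring

end AboveThreshold

/-- ε-DP of the Laplace Noisy Backtracking Line Search /
AboveThreshold mechanism, Theorem 1 of the paper.
With threshold-noise density `p₁` Laplace of scale `Δ/ε₁` (`ε₁ = ε/2`) and
query-noise density `p₂` Laplace of scale `Δ/ε₂` (`ε₂ = ε/4`), the probabilities
`P k a` of outputting index `k` and `Q a` of failure satisfy
`P k a ≤ e^ε P k b` and `Q a ≤ e^ε Q b` whenever `|a i − b i| ≤ Δ` for all `i`. -/
theorem noisyBTLS_laplace_pure_DP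
    (K : ℕ) (Δ ε : ℝ) (hΔ : 0 < Δ) (hε : 0 < ε)
    (ε₁ ε₂ : ℝ) (hε₁ : ε₁ = ε / 2) (hε₂ : ε₂ = ε / 4)
    (p₁ p₂ : ℝ → ℝ)
    (hp₁ : ∀ z : ℝ, p₁ z = ε₁ / (2 * Δ) * Real.exp (-(ε₁ * |z|) / Δ))
    (hp₂ : ∀ y : ℝ, p₂ y = ε₂ / (2 * Δ) * Real.exp (-(ε₂ * |y|) / Δ))
    (Φ₂ : ℝ → ℝ) (hΦ₂ : ∀ t : ℝ, Φ₂ t = ∫ u in Set.Iic t, p₂ u)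
    (P : Fin K → (Fin K → ℝ) → ℝ)
    (hP : ∀ (k : Fin K) (a : Fin K → ℝ),
      P k a = ∫ z : ℝ,
        (∏ i ∈ Finset.univ.filter (fun i : Fin K => i < k), Φ₂ (z - a i)) *
          (1 - Φ₂ (z - a k)) * p₁ z)
    (Q : (Fin K → ℝ) → ℝ)
    (hQ : ∀ a : Fin K → ℝ, Q a = ∫ z : ℝ, (∏ i : Fin K, Φ₂ (z - a i)) * p₁ z)
    (a b : Fin K → ℝ) (hab : ∀ i : Fin K, |a i - b i| ≤ Δ) :
    (∀ k : Fin K, P k a ≤ Real.exp ε * P k b) ∧ Q a ≤ Real.exp ε * Q b := by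
  subst hε₁ hε₂
  obtain rfl : p₁ = laplacePDF (ε / 2 / Δ) := funext fun z => by rw [hp₁, laplacePDF]; ring_nf
  obtain rfl : p₂ = laplacePDF (ε / 4 / Δ) := funext fun z => by rw [hp₂, laplacePDF]; ring_nf
  obtain rfl : Φ₂ = laplaceCDF (ε / 4 / Δ) := funext hΦ₂
  have hc₁ : 0 < ε / 2 / Δ := by positivity
  have hc₂ : 0 < ε / 4 / Δ := by positivity
  have hpΔ (z : ℝ) : laplacePDF (ε / 2 / Δ) z ≤ exp (ε / 2) * laplacePDF (ε / 2 / Δ) (z + Δ) := by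
    simpa [abs_of_pos hΔ, div_mul_cancel₀ _ hΔ.ne'] using
      laplacePDF.le_exp_mul_abs_mul_add hc₁.le z Δ
  have hΦΔ (t d : ℝ) (hd : |d| ≤ 2 * Δ) : 1 - laplaceCDF (ε / 4 / Δ) t ≤
      exp (ε / 2) * (1 - laplaceCDF (ε / 4 / Δ) (t + d)) := by
    refine (laplaceCDF.one_sub_le_exp_mul_abs_mul_one_sub_add hc₂ t d).trans ?_
    gcongr
    · exact sub_nonneg.2 (laplaceCDF.le_one hc₂ _)
    · calc ε / 4 / Δ * |d| ≤ ε / 4 / Δ * (2 * Δ) := by gcongr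
        _ = ε / 2 := by field_simp; ring
  refine ⟨fun k => ?_, ?_⟩
  · rw [hP, hP, show exp ε = exp (ε / 2) * exp (ε / 2) by rw [← exp_add, add_halves]]
    exact integral_prod_mul_one_sub_mul_le (laplaceCDF.monotone hc₂) (laplaceCDF.nonneg hc₂.le)
      (laplaceCDF.le_one hc₂) (laplacePDF.integrable hc₁) (laplacePDF.nonneg hc₁.le) hab _ hpΔ hΦΔ k
  · rw [hQ, hQ]
    refine (integral_prod_mul_le (laplaceCDF.monotone hc₂) (laplaceCDF.nonneg hc₂.le)
      (laplaceCDF.le_one hc₂) hab _ (laplacePDF.nonneg hc₁.le) (laplacePDF.integrable hc₁)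
      hpΔ).trans ?_
    gcongr
    · exact integral_nonneg fun z => mul_nonneg (Finset.prod_nonneg fun i _ =>
        laplaceCDF.nonneg hc₂.le _) (laplacePDF.nonneg hc₁.le z)
    · linarith
end

section
/- Let λ > 0, μ ≥ 0, and α > 1 be real numbers, and let Λ(x; m, λ) = (1/(2λ)) exp(−|x − m|/λ) denote the Laplace density with mean m and scale λ. Then ∫_ℝ Λ(x; 0, λ)^α · Λ(x; μ, λ)^{1−α} dx = (α/(2α − 1)) · exp(μ(α − 1)/λ) + ((α − 1)/(2α − 1)) · exp(−μα/λ). -/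
/-!
The integrand is `exp (-(α|x| + (1 - α)|x - μ|)/λ) / (2λ)`. On each of `(-∞, 0]`, `(0, μ]` and
`(μ, ∞)` its exponent is affine, with slopes `1/λ`, `-(2α - 1)/λ` and `-1/λ`, so the integral is
a sum of three elementary exponential integrals.
-/

open MeasureTheory Real Set

section ExpAffine

variable {a : ℝ} (b c : ℝ)

lemma integrableOn_exp_mul_add_Iic (ha : 0 < a) :
    IntegrableOn (fun x : ℝ => exp (a * x + b)) (Iic c) := by
  simp only [exp_add]
  exact (integrableOn_exp_mul_Iic ha c).mul_const (exp b)

lemma integral_exp_mul_add_Iic (ha : 0 < a) :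
    ∫ x in Iic c, exp (a * x + b) = exp (a * c + b) / a := by
  simp_rw [exp_add, integral_mul_const, integral_exp_mul_Iic ha]
  ring

lemma integrableOn_exp_mul_add_Ioi (ha : a < 0) :
    IntegrableOn (fun x : ℝ => exp (a * x + b)) (Ioi c) := by
  simp only [exp_add]
  exact (integrableOn_exp_mul_Ioi ha c).mul_const (exp b)

lemma integral_exp_mul_add_Ioi (ha : a < 0) :
    ∫ x in Ioi c, exp (a * x + b) = -exp (a * c + b) / a := by
  simp_rw [exp_add, integral_mul_const, integral_exp_mul_Ioi ha]
  ring

lemma integral_exp_mul_add_Ioc (ha : a ≠ 0) {d : ℝ} (hcd : c ≤ d) :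
    ∫ x in Ioc c d, exp (a * x + b) = (exp (a * d + b) - exp (a * c + b)) / a := by
  rw [← intervalIntegral.integral_of_le hcd, intervalIntegral.integral_comp_mul_add _ ha,
    integral_exp, smul_eq_mul, inv_mul_eq_div]

end ExpAffine

lemma integral_eq_Iic_add_Ioc_add_Ioi {E : Type*} [NormedAddCommGroup E] [NormedSpace ℝ E]
    {f : ℝ → E} {a b : ℝ} (hab : a ≤ b) (h₁ : IntegrableOn f (Iic a))
    (h₂ : IntegrableOn f (Ioc a b)) (h₃ : IntegrableOn f (Ioi b)) :
    ∫ x, f x = (∫ x in Iic a, f x) + (∫ x in Ioc a b, f x) + ∫ x in Ioi b, f x := by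
  rw [add_assoc, ← setIntegral_union (Ioc_disjoint_Ioi le_rfl) measurableSet_Ioi h₂ h₃,
    Ioc_union_Ioi_eq_Ioi hab, intervalIntegral.integral_Iic_add_Ioi h₁]
  rw [← Ioc_union_Ioi_eq_Ioi hab]
  exact h₂.union h₃

lemma mul_exp_rpow_mul_mul_exp_rpow {c : ℝ} (hc : 0 ≤ c) (u v α : ℝ) :
    (c * exp u) ^ α * (c * exp v) ^ (1 - α) = c * exp (α * u + (1 - α) * v) := by
  rw [mul_rpow hc (exp_pos u).le, mul_rpow hc (exp_pos v).le, ← exp_mul, ← exp_mul,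
    mul_mul_mul_comm, ← rpow_add' hc (by norm_num), add_sub_cancel, rpow_one, ← exp_add,
    mul_comm u, mul_comm v]

/-- `α log Λ(x; 0, λ) + (1 - α) log Λ(x; μ, λ) + log (2λ)`, `Λ` the Laplace density. -/
noncomputable def laplaceMomentExponent (lam μ α x : ℝ) : ℝ :=
  α * (-|x| / lam) + (1 - α) * (-|x - μ| / lam)

section LaplaceMomentExponent

variable {lam μ α : ℝ}

lemma laplaceMomentExponent_eqOn_Iic (hμ : 0 ≤ μ) :
    EqOn (laplaceMomentExponent lam μ α) (fun x => lam⁻¹ * x + μ * (α - 1) / lam) (Iic 0) :=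
  fun x (hx : x ≤ 0) => by
    rw [laplaceMomentExponent, abs_of_nonpos hx, abs_of_nonpos (by linarith : x - μ ≤ 0)]
    ring

lemma laplaceMomentExponent_eqOn_Ioc :
    EqOn (laplaceMomentExponent lam μ α)
      (fun x => -((2 * α - 1) / lam) * x + μ * (α - 1) / lam) (Ioc 0 μ) :=
  fun x ⟨hx₀, hxμ⟩ => by
    rw [laplaceMomentExponent, abs_of_pos hx₀, abs_of_nonpos (by linarith : x - μ ≤ 0)]
    ring

lemma laplaceMomentExponent_eqOn_Ioi (hμ : 0 ≤ μ) :
    EqOn (laplaceMomentExponent lam μ α)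
      (fun x => -lam⁻¹ * x + -(μ * (α - 1)) / lam) (Ioi μ) :=
  fun x (hx : μ < x) => by
    rw [laplaceMomentExponent, abs_of_pos (by linarith : 0 < x),
      abs_of_pos (by linarith : 0 < x - μ)]
    ring

theorem integral_exp_laplaceMomentExponent (hlam : 0 < lam) (hμ : 0 ≤ μ)
    (hα : 2 * α - 1 ≠ 0) :
    ∫ x, exp (laplaceMomentExponent lam μ α x) =
      2 * lam * (α / (2 * α - 1) * exp (μ * (α - 1) / lam) +
        (α - 1) / (2 * α - 1) * exp (-(μ * α) / lam)) := by
  set f : ℝ → ℝ := fun x => exp (laplaceMomentExponent lam μ α x)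
  have hf₁ : EqOn f (fun x => exp (lam⁻¹ * x + μ * (α - 1) / lam)) (Iic 0) :=
    fun x hx => congrArg exp (laplaceMomentExponent_eqOn_Iic hμ hx)
  have hf₂ : EqOn f (fun x => exp (-((2 * α - 1) / lam) * x + μ * (α - 1) / lam)) (Ioc 0 μ) :=
    fun x hx => congrArg exp (laplaceMomentExponent_eqOn_Ioc hx)
  have hf₃ : EqOn f (fun x => exp (-lam⁻¹ * x + -(μ * (α - 1)) / lam)) (Ioi μ) :=
    fun x hx => congrArg exp (laplaceMomentExponent_eqOn_Ioi hμ hx)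
  have hlam' : 0 < lam⁻¹ := inv_pos.2 hlam
  have hlam'' : -lam⁻¹ < 0 := neg_neg_iff_pos.2 hlam'
  have hint₁ := (integrableOn_exp_mul_add_Iic _ 0 hlam').congr_fun hf₁.symm measurableSet_Iic
  have hint₂ : IntegrableOn f (Ioc 0 μ) :=
    Continuous.integrableOn_Ioc (by simp only [f, laplaceMomentExponent]; fun_prop)
  have hint₃ := (integrableOn_exp_mul_add_Ioi _ μ hlam'').congr_fun hf₃.symm measurableSet_Ioi
  have v₁ : ∫ x in Iic 0, f x = lam * exp (μ * (α - 1) / lam) := by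
    rw [setIntegral_congr_fun measurableSet_Iic hf₁, integral_exp_mul_add_Iic _ _ hlam', mul_zero,
      zero_add, div_inv_eq_mul, mul_comm]
  have v₂ : ∫ x in Ioc 0 μ, f x =
      lam / (2 * α - 1) * (exp (μ * (α - 1) / lam) - exp (-(μ * α) / lam)) := by
    rw [setIntegral_congr_fun measurableSet_Ioc hf₂,
      integral_exp_mul_add_Ioc _ _ (neg_ne_zero.2 (div_ne_zero hα hlam.ne')) hμ,
      show -((2 * α - 1) / lam) * μ + μ * (α - 1) / lam = -(μ * α) / lam by ring, mul_zero,
      zero_add]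
    field_simp
    ring
  have v₃ : ∫ x in Ioi μ, f x = lam * exp (-(μ * α) / lam) := by
    rw [setIntegral_congr_fun measurableSet_Ioi hf₃, integral_exp_mul_add_Ioi _ _ hlam'',
      show -lam⁻¹ * μ + -(μ * (α - 1)) / lam = -(μ * α) / lam by ring]
    field_simp
  rw [integral_eq_Iic_add_Ioc_add_Ioi hμ hint₁ hint₂ hint₃, v₁, v₂, v₃]
  generalize exp (μ * (α - 1) / lam) = e₁
  generalize exp (-(μ * α) / lam) = e₂
  field_simp
  ring

end LaplaceMomentExponent

/-- closed form of the α-th moment between two Laplace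
densities with the same scale `lam` and means `0` and `μ`, used in the proof of
Theorem 2 of the paper:
`∫ Λ(x;0,lam)^α Λ(x;μ,lam)^{1−α} dx
  = α/(2α−1) · e^{μ(α−1)/lam} + (α−1)/(2α−1) · e^{−μα/lam}`. -/
theorem laplace_renyi_moment
    (lam μ α : ℝ) (hlam : 0 < lam) (hμ : 0 ≤ μ) (hα : 1 < α)
    (Λ : ℝ → ℝ → ℝ → ℝ)
    (hΛ : ∀ x m l : ℝ, Λ x m l = 1 / (2 * l) * Real.exp (-|x - m| / l)) :
    (∫ x : ℝ, (Λ x 0 lam) ^ α * (Λ x μ lam) ^ (1 - α)) =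
      α / (2 * α - 1) * Real.exp (μ * (α - 1) / lam) +
        (α - 1) / (2 * α - 1) * Real.exp (-(μ * α) / lam) := by
  have hpointwise : ∀ x, Λ x 0 lam ^ α * Λ x μ lam ^ (1 - α) =
      1 / (2 * lam) * exp (laplaceMomentExponent lam μ α x) := fun x => by
    rw [hΛ, hΛ, sub_zero, mul_exp_rpow_mul_mul_exp_rpow (by positivity), laplaceMomentExponent]
  simp_rw [hpointwise]
  rw [integral_const_mul, integral_exp_laplaceMomentExponent hlam hμ (by linarith)]
  field_simp
end

section
/- Let σ > 0, μ ∈ ℝ, and α > 1 be real numbers, and let f(x; m, σ²) = (1/√(2πσ²)) exp(−(x − m)²/(2σ²)) denote the Gaussian density with mean m and variance σ². Then ∫_ℝ f(x; 0, σ²)^α · f(x; μ, σ²)^{1−α} dx = exp( α(α − 1) μ² / (2σ²) ). -/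
open MeasureTheory Real ProbabilityTheory
open scoped NNReal

/-! Completing the square in the exponent shows that the geometric mixture `p₁^α p₂^(1-α)` of
two Gaussian densities with common variance `v` is `exp (α (α - 1) (m₁ - m₂)² / (2 v))` times the
Gaussian density with mean `α m₁ + (1 - α) m₂`, which integrates to one. -/

lemma sq_sub_weighted_mean (α m₁ m₂ x : ℝ) :
    α * (x - m₁) ^ 2 + (1 - α) * (x - m₂) ^ 2 =
      (x - (α * m₁ + (1 - α) * m₂)) ^ 2 + α * (1 - α) * (m₁ - m₂) ^ 2 := by
  ring

lemma gaussianPDFReal_rpow_mul_rpow_one_sub (m₁ m₂ : ℝ) (v : ℝ≥0) (α x : ℝ) :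
    gaussianPDFReal m₁ v x ^ α * gaussianPDFReal m₂ v x ^ (1 - α) =
      exp (α * (α - 1) * (m₁ - m₂) ^ 2 / (2 * v)) *
        gaussianPDFReal (α * m₁ + (1 - α) * m₂) v x := by
  set c : ℝ := (√(2 * π * v))⁻¹
  have hc : 0 ≤ c := by positivity
  have hc_rpow : c ^ α * c ^ (1 - α) = c := by
    rw [← rpow_add' hc (by norm_num), add_sub_cancel, rpow_one]
  have h_exp : exp (-(x - m₁) ^ 2 / (2 * v)) ^ α * exp (-(x - m₂) ^ 2 / (2 * v)) ^ (1 - α) =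
      exp (α * (α - 1) * (m₁ - m₂) ^ 2 / (2 * v)) *
        exp (-(x - (α * m₁ + (1 - α) * m₂)) ^ 2 / (2 * v)) := by
    rw [← exp_mul, ← exp_mul, ← exp_add, ← exp_add]
    congr 1
    linear_combination (-1 / (2 * (v : ℝ))) * sq_sub_weighted_mean α m₁ m₂ x
  simp only [gaussianPDFReal]
  rw [mul_rpow hc (exp_pos _).le, mul_rpow hc (exp_pos _).le,
    mul_mul_mul_comm, hc_rpow, h_exp, mul_left_comm]

lemma integral_gaussianPDFReal_rpow_mul_rpow_one_sub (m₁ m₂ : ℝ) {v : ℝ≥0} (hv : v ≠ 0)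
    (α : ℝ) :
    ∫ x, gaussianPDFReal m₁ v x ^ α * gaussianPDFReal m₂ v x ^ (1 - α) =
      exp (α * (α - 1) * (m₁ - m₂) ^ 2 / (2 * v)) := by
  simp_rw [gaussianPDFReal_rpow_mul_rpow_one_sub, integral_const_mul,
    integral_gaussianPDFReal_eq_one _ hv, mul_one]

theorem gaussian_renyi_moment_general
    (σ μ α : ℝ) (hσ : 0 < σ)
    (f : ℝ → ℝ → ℝ → ℝ)
    (hf : ∀ x m v : ℝ,
      f x m v = 1 / Real.sqrt (2 * Real.pi * v) * Real.exp (-(x - m) ^ 2 / (2 * v))) :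
    (∫ x : ℝ, (f x 0 (σ ^ 2)) ^ α * (f x μ (σ ^ 2)) ^ (1 - α)) =
      Real.exp (α * (α - 1) * μ ^ 2 / (2 * σ ^ 2)) := by
  let v : ℝ≥0 := ⟨σ ^ 2, sq_nonneg σ⟩
  have hv : v ≠ 0 := by
    rw [← NNReal.coe_ne_zero]
    exact (pow_pos hσ 2).ne'
  have hf_pdf : ∀ x m, f x m (σ ^ 2) = gaussianPDFReal m v x := fun x m => by
    rw [hf, gaussianPDFReal, one_div]
    rfl
  simp_rw [hf_pdf]
  rw [integral_gaussianPDFReal_rpow_mul_rpow_one_sub 0 μ hv, zero_sub, neg_sq]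
  rfl

/-- closed form of the α-th moment between two Gaussian
densities with the same variance `σ²` and means `0` and `μ`, used in the proof
of Theorem 3 of the paper:
`∫ f(x;0,σ²)^α f(x;μ,σ²)^{1−α} dx = exp(α(α−1)μ²/(2σ²))`. -/
theorem gaussian_renyi_moment
    (σ μ α : ℝ) (hσ : 0 < σ) (hα : 1 < α)
    (f : ℝ → ℝ → ℝ → ℝ)
    (hf : ∀ x m v : ℝ,
      f x m v = 1 / Real.sqrt (2 * Real.pi * v) * Real.exp (-(x - m) ^ 2 / (2 * v))) :
    (∫ x : ℝ, (f x 0 (σ ^ 2)) ^ α * (f x μ (σ ^ 2)) ^ (1 - α)) =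
      Real.exp (α * (α - 1) * μ ^ 2 / (2 * σ ^ 2)) :=
  gaussian_renyi_moment_general σ μ α hσ f hf
end

section
/- Fix K ∈ ℕ, Δ > 0, σ₁ > 0, σ₂ > 0, and a real α > 1. Let the threshold noise density be p₁(z) = f(z; 0, Δ²σ₁²) and the query noise density be p₂(y) = f(y; 0, Δ²σ₂²), where f(x; m, σ²) is the Gaussian density with mean m and variance σ², and let Φ₂(t) = ∫_{−∞}^t p₂(u) du. For a query vector a ∈ ℝ^K define P_k(a) = ∫_ℝ (∏_{i=1}^{k−1} Φ₂(z − a_i)) (1 − Φ₂(z − a_k)) p₁(z) dz. Then for any a, b ∈ ℝ^K with |a_i − b_i| ≤ Δ for all i, and for every k ∈ {1, …, K}: P_k(a)^α · P_k(b)^{1−α} ≤ exp( α(α − 1)(4σ₁² + σ₂²) / (2σ₁²σ₂²) ). Equivalently, (1/(α−1)) log( P_k(a)^α P_k(b)^{1−α} ) ≤ α(4σ₁² + σ₂²)/(2σ₁²σ₂²). -/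
/-!
Shift the threshold variable of `P_k(a)` by `Δ`. Since `b_i ≤ a_i + Δ` and `Φ₂` is monotone, the
product of the earlier factors becomes at most the one of `P_k(b)`, so `P_k(a) ≤ ∫ f` and
`P_k(b) = ∫ g` where `f` and `g` share that product (a number in `(0, 1]`) and differ only in the
last factor and in the threshold density, `p₁(z - Δ)` versus `p₁(z)`. Hölder's inequality, in the
form `(∫ f)^α (∫ g)^(1-α) ≤ ∫ f^α g^(1-α)`, reduces the claim to a pointwise bound. As
`a_k ≤ b_k + Δ`, the ratio of the last factors is at most
`(1 - Φ₂(t - 2Δ))^α (1 - Φ₂(t))^(1-α)`, which is at most `exp(α(α-1)(2Δ)²/(2Δ²σ₂²))` by Hölder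
again, applied to two Gaussian densities on `(t, ∞)`; and
`∫ p₁(z - Δ)^α p₁(z)^(1-α) dz = exp(α(α-1)Δ²/(2Δ²σ₁²))` in closed form.
-/

open MeasureTheory Real ProbabilityTheory Set Finset
open scoped NNReal

theorem memLp_ofReal_of_integrable_rpow {Ω : Type*} [MeasurableSpace Ω]
    {μ : Measure Ω} {p : ℝ} (hp : 0 < p) {u : Ω → ℝ} (hu : 0 ≤ u) (hum : AEMeasurable u μ)
    (hi : Integrable (fun x => u x ^ p) μ) : MemLp u (ENNReal.ofReal p) μ := by
  refine (integrable_norm_rpow_iff hum.aestronglyMeasurable (by simpa using hp)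
    ENNReal.ofReal_ne_top).1 ?_
  simpa only [norm_of_nonneg (hu _), ENNReal.toReal_ofReal hp.le] using hi

theorem integral_rpow_mul_integral_rpow_one_sub_le {Ω : Type*} [MeasurableSpace Ω]
    {μ : Measure Ω} {α : ℝ} (hα : 1 < α) {f g : Ω → ℝ} (hf : 0 ≤ f) (hg : ∀ x, 0 < g x)
    (hfi : Integrable f μ) (hgi : Integrable g μ)
    (hfgi : Integrable (fun x => f x ^ α * g x ^ (1 - α)) μ) :
    (∫ x, f x ∂μ) ^ α * (∫ x, g x ∂μ) ^ (1 - α) ≤ ∫ x, f x ^ α * g x ^ (1 - α) ∂μ := by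
  have hα0 : 0 < α := zero_lt_one.trans hα
  have hα1 : α - 1 ≠ 0 := by linarith
  set R := ∫ x, f x ^ α * g x ^ (1 - α) ∂μ
  set J := ∫ x, g x ∂μ
  have hR : 0 ≤ R :=
    integral_nonneg fun x => mul_nonneg (rpow_nonneg (hf x) _) (rpow_nonneg (hg x).le _)
  have hJ0 : 0 ≤ J := integral_nonneg fun x => (hg x).le
  rcases hJ0.eq_or_lt with hJ | hJ
  · rwa [← hJ, zero_rpow (by linarith), mul_zero]
  -- Hölder with exponents `α` and `α / (α - 1)`, applied to `f = (f g^{(1-α)/α}) g^{(α-1)/α}`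
  have hpq : α.HolderConjugate (α / (α - 1)) := .conjExponent hα
  have hu : ∀ x, (f x * g x ^ ((1 - α) / α)) ^ α = f x ^ α * g x ^ (1 - α) := fun x => by
    rw [mul_rpow (hf x) (rpow_nonneg (hg x).le _), ← rpow_mul (hg x).le,
      div_mul_cancel₀ _ hα0.ne']
  have hw : ∀ x, (g x ^ ((α - 1) / α)) ^ (α / (α - 1)) = g x := fun x => by
    rw [← rpow_mul (hg x).le, show (α - 1) / α * (α / (α - 1)) = 1 by field_simp, rpow_one]
  have hfw : ∀ x, f x * g x ^ ((1 - α) / α) * g x ^ ((α - 1) / α) = f x := fun x => by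
    rw [mul_assoc, ← rpow_add (hg x), ← add_div, show 1 - α + (α - 1) = 0 by ring, zero_div,
      rpow_zero, mul_one]
  have holder := integral_mul_le_Lp_mul_Lq_of_nonneg hpq
    (.of_forall fun x => mul_nonneg (hf x) (rpow_nonneg (hg x).le _))
    (.of_forall fun x => rpow_nonneg (hg x).le _)
    (memLp_ofReal_of_integrable_rpow hα0 (fun x => mul_nonneg (hf x) (rpow_nonneg (hg x).le _))
      (hfi.aemeasurable.mul (hgi.aemeasurable.pow_const ((1 - α) / α)))
      (by simpa only [hu] using hfgi))
    (memLp_ofReal_of_integrable_rpow hpq.symm.pos (fun x => rpow_nonneg (hg x).le _)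
      (hgi.aemeasurable.pow_const ((α - 1) / α)) (by simpa only [hw] using hgi))
  simp only [hu, hw, hfw] at holder
  calc (∫ x, f x ∂μ) ^ α * J ^ (1 - α)
      ≤ (R ^ (1 / α) * J ^ (1 / (α / (α - 1)))) ^ α * J ^ (1 - α) := by
        gcongr
        exact integral_nonneg hf
    _ = R := by
        rw [mul_rpow (by positivity) (by positivity), ← rpow_mul hR, ← rpow_mul hJ.le, mul_assoc,
          ← rpow_add hJ, one_div_mul_cancel hα0.ne', rpow_one,
          show 1 / (α / (α - 1)) * α + (1 - α) = 0 by field_simp; ring, rpow_zero, mul_one]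

theorem integral_rpow_mul_integral_rpow_one_sub_le_of_le {Ω : Type*} [MeasurableSpace Ω]
    {μ : Measure Ω} {α : ℝ} (hα : 1 < α) {f g h : Ω → ℝ} (hf : 0 ≤ f) (hg : ∀ x, 0 < g x)
    (hfi : Integrable f μ) (hgi : Integrable g μ) (hhi : Integrable h μ)
    (hfgh : ∀ x, f x ^ α * g x ^ (1 - α) ≤ h x) :
    (∫ x, f x ∂μ) ^ α * (∫ x, g x ∂μ) ^ (1 - α) ≤ ∫ x, h x ∂μ := by
  have hfgi : Integrable (fun x => f x ^ α * g x ^ (1 - α)) μ :=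
    hhi.mono'
      ((hfi.aemeasurable.pow_const α).mul (hgi.aemeasurable.pow_const _)).aestronglyMeasurable
      (.of_forall fun x => by
        rw [norm_of_nonneg (mul_nonneg (rpow_nonneg (hf x) _) (rpow_nonneg (hg x).le _))]
        exact hfgh x)
  exact (integral_rpow_mul_integral_rpow_one_sub_le hα hf hg hfi hgi hfgi).trans
    (integral_mono hfgi hhi hfgh)

section Gaussian

variable {v : ℝ≥0}

theorem gaussianPDFReal_rpow_mul_rpow (hv : v ≠ 0) (α m m' x : ℝ) :
    gaussianPDFReal m v x ^ α * gaussianPDFReal m' v x ^ (1 - α) =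
      exp (α * (α - 1) * (m - m') ^ 2 / (2 * v)) * gaussianPDFReal (α * m + (1 - α) * m') v x := by
  have hv' : (v : ℝ) ≠ 0 := NNReal.coe_ne_zero.2 hv
  have hc : 0 < (√(2 * π * v))⁻¹ := by positivity
  simp only [gaussianPDFReal_def]
  rw [mul_rpow hc.le (exp_nonneg _), mul_rpow hc.le (exp_nonneg _), ← exp_mul, ← exp_mul,
    mul_mul_mul_comm, ← rpow_add hc, add_sub_cancel, rpow_one, ← exp_add, mul_left_comm,
    ← exp_add]
  congr 2
  field_simp
  ring

theorem integrable_gaussianPDFReal_rpow_mul_rpow (hv : v ≠ 0) (α m m' : ℝ) :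
    Integrable (fun x => gaussianPDFReal m v x ^ α * gaussianPDFReal m' v x ^ (1 - α)) := by
  simp only [gaussianPDFReal_rpow_mul_rpow hv]
  exact (integrable_gaussianPDFReal _ v).const_mul _

theorem integral_gaussianPDFReal_rpow_mul_rpow (hv : v ≠ 0) (α m m' : ℝ) :
    ∫ x, gaussianPDFReal m v x ^ α * gaussianPDFReal m' v x ^ (1 - α) =
      exp (α * (α - 1) * (m - m') ^ 2 / (2 * v)) := by
  simp only [gaussianPDFReal_rpow_mul_rpow hv, integral_const_mul,
    integral_gaussianPDFReal_eq_one _ hv, mul_one]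

theorem setIntegral_gaussianPDFReal_rpow_mul_rpow_le (hv : v ≠ 0) {α : ℝ} (hα : 1 < α)
    (m m' : ℝ) (s : Set ℝ) :
    (∫ x in s, gaussianPDFReal m v x) ^ α * (∫ x in s, gaussianPDFReal m' v x) ^ (1 - α) ≤
      exp (α * (α - 1) * (m - m') ^ 2 / (2 * v)) := by
  calc _ ≤ ∫ x in s, gaussianPDFReal m v x ^ α * gaussianPDFReal m' v x ^ (1 - α) :=
        integral_rpow_mul_integral_rpow_one_sub_le hα (gaussianPDFReal_nonneg m v)
          (gaussianPDFReal_pos m' v · hv) (integrable_gaussianPDFReal m v).restrict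
          (integrable_gaussianPDFReal m' v).restrict
          (integrable_gaussianPDFReal_rpow_mul_rpow hv α m m').restrict
    _ ≤ ∫ x, gaussianPDFReal m v x ^ α * gaussianPDFReal m' v x ^ (1 - α) :=
        setIntegral_le_integral (integrable_gaussianPDFReal_rpow_mul_rpow hv α m m')
          (.of_forall fun x => mul_nonneg (rpow_nonneg (gaussianPDFReal_nonneg m v x) _)
            (rpow_nonneg (gaussianPDFReal_nonneg m' v x) _))
    _ = _ := integral_gaussianPDFReal_rpow_mul_rpow hv α m m'

theorem setIntegral_gaussianPDFReal_pos (hv : v ≠ 0) (m : ℝ) {s : Set ℝ} (hs : volume s ≠ 0) :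
    0 < ∫ x in s, gaussianPDFReal m v x := by
  rw [setIntegral_pos_iff_support_of_nonneg_ae (.of_forall (gaussianPDFReal_nonneg m v))
    (integrable_gaussianPDFReal m v).integrableOn]
  simpa [Function.support, (gaussianPDFReal_pos m v _ hv).ne', pos_iff_ne_zero] using hs

theorem monotone_setIntegral_Iic_gaussianPDFReal (m : ℝ) :
    Monotone fun t => ∫ x in Iic t, gaussianPDFReal m v x := fun _ _ hst =>
  setIntegral_mono_set (integrable_gaussianPDFReal m v).integrableOn
    (.of_forall (gaussianPDFReal_nonneg m v)) (Set.Iic_subset_Iic.2 hst).eventuallyLE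

theorem one_sub_setIntegral_Iic_gaussianPDFReal (hv : v ≠ 0) (m t : ℝ) :
    1 - ∫ x in Iic t, gaussianPDFReal m v x = ∫ x in Ioi t, gaussianPDFReal m v x := by
  rw [← integral_gaussianPDFReal_eq_one m hv,
    ← integral_add_compl measurableSet_Iic (integrable_gaussianPDFReal m v), compl_Iic,
    add_sub_cancel_left]

theorem setIntegral_Ioi_sub_gaussianPDFReal (m t c : ℝ) :
    ∫ x in Ioi (t - c), gaussianPDFReal m v x = ∫ x in Ioi t, gaussianPDFReal (m + c) v x := by
  simp only [← gaussianPDFReal_sub]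
  rw [← (measurePreserving_sub_right volume c).setIntegral_preimage_emb
    (measurableEmbedding_subRight c), preimage_sub_const_Ioi, sub_add_cancel]

end Gaussian

theorem mul_mul_rpow_mul_mul_rpow_le {α C x y p q c : ℝ} (hC : 0 < C) (hC1 : C ≤ 1)
    (hx : 0 ≤ x) (hy : 0 ≤ y) (hp : 0 ≤ p) (hq : 0 ≤ q) (hxy : x ^ α * y ^ (1 - α) ≤ c) :
    (C * x * p) ^ α * (C * y * q) ^ (1 - α) ≤ c * (p ^ α * q ^ (1 - α)) := by
  calc (C * x * p) ^ α * (C * y * q) ^ (1 - α)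
      = C ^ (α + (1 - α)) * (x ^ α * y ^ (1 - α)) * (p ^ α * q ^ (1 - α)) := by
        rw [mul_rpow (by positivity) hp, mul_rpow (by positivity) hq, mul_rpow hC.le hx,
          mul_rpow hC.le hy, rpow_add hC]
        ring
    _ ≤ 1 * c * (p ^ α * q ^ (1 - α)) := by
        rw [add_sub_cancel, rpow_one]
        gcongr
    _ = c * (p ^ α * q ^ (1 - α)) := by rw [one_mul]

section AboveThreshold

variable {ι : Type*} {p₁ Φ : ℝ → ℝ}

/-- The probability `P_k(a)` that AboveThreshold, with threshold-noise density `p₁` and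
query-noise CDF `Φ`, outputs `k`; `s` is the set of queries asked before `k`. -/
noncomputable def aboveThresholdProb (p₁ Φ : ℝ → ℝ) (s : Finset ι) (k : ι) (a : ι → ℝ) : ℝ :=
  ∫ z, (∏ i ∈ s, Φ (z - a i)) * (1 - Φ (z - a k)) * p₁ z

theorem integrable_prod_mul_one_sub_mul (hΦ : Measurable Φ) (hΦ0 : ∀ t, 0 ≤ Φ t)
    (hΦ1 : ∀ t, Φ t ≤ 1) {p : ℝ → ℝ} (hp : Integrable p) (s : Finset ι) (c : ι → ℝ) (d : ℝ) :
    Integrable fun w => (∏ i ∈ s, Φ (w - c i)) * (1 - Φ (w - d)) * p w := by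
  refine hp.bdd_mul (c := 1) (by fun_prop) (.of_forall fun w => ?_)
  rw [norm_of_nonneg (mul_nonneg (prod_nonneg fun i _ => hΦ0 _) (sub_nonneg.2 (hΦ1 _)))]
  exact mul_le_one₀ (prod_le_one (fun i _ => hΦ0 _) fun i _ => hΦ1 _)
    (sub_nonneg.2 (hΦ1 _)) (by linarith [hΦ0 (w - d)])

theorem aboveThresholdProb_le_integral_shift (hp₁ : ∀ z, 0 ≤ p₁ z) (hp₁i : Integrable p₁)
    (hΦ : Monotone Φ) (hΦ0 : ∀ t, 0 ≤ Φ t) (hΦ1 : ∀ t, Φ t ≤ 1) (s : Finset ι) (k : ι)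
    {a b : ι → ℝ} {Δ : ℝ} (hba : ∀ i, b i ≤ a i + Δ) :
    aboveThresholdProb p₁ Φ s k a ≤
      ∫ w, (∏ i ∈ s, Φ (w - b i)) * (1 - Φ (w - (Δ + a k))) * p₁ (w - Δ) := by
  rw [aboveThresholdProb, ← integral_sub_right_eq_self _ Δ]
  refine integral_mono
    ((integrable_prod_mul_one_sub_mul hΦ.measurable hΦ0 hΦ1 hp₁i s a (a k)).comp_sub_right Δ)
    (integrable_prod_mul_one_sub_mul hΦ.measurable hΦ0 hΦ1 (hp₁i.comp_sub_right Δ) s b _)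
    fun w => ?_
  simp only [sub_sub]
  refine mul_le_mul_of_nonneg_right (mul_le_mul_of_nonneg_right ?_ (sub_nonneg.2 (hΦ1 _))) (hp₁ _)
  exact prod_le_prod (fun i _ => hΦ0 _) fun i _ => hΦ (by linarith [hba i])

theorem aboveThresholdProb_rpow_mul_rpow_le {α Δ c₁ c₂ : ℝ} (hα : 1 < α)
    (hp₁ : ∀ z, 0 < p₁ z) (hp₁i : Integrable p₁)
    (hp₁r : Integrable fun z => p₁ (z - Δ) ^ α * p₁ z ^ (1 - α))
    (hc₁ : ∫ z, p₁ (z - Δ) ^ α * p₁ z ^ (1 - α) ≤ c₁)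
    (hΦ : Monotone Φ) (hΦ0 : ∀ t, 0 < Φ t) (hΦ1 : ∀ t, Φ t < 1)
    (hc₂ : ∀ t, (1 - Φ (t - 2 * Δ)) ^ α * (1 - Φ t) ^ (1 - α) ≤ c₂)
    (s : Finset ι) (k : ι) {a b : ι → ℝ} (hab : ∀ i, |a i - b i| ≤ Δ) :
    aboveThresholdProb p₁ Φ s k a ^ α * aboveThresholdProb p₁ Φ s k b ^ (1 - α) ≤ c₂ * c₁ := by
  have hΦ0' : ∀ t, 0 ≤ Φ t := fun t => (hΦ0 t).le
  have hΦ1' : ∀ t, Φ t ≤ 1 := fun t => (hΦ1 t).le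
  have hS : ∀ t, 0 < 1 - Φ t := fun t => sub_pos.2 (hΦ1 t)
  set C : ℝ → ℝ := fun w => ∏ i ∈ s, Φ (w - b i)
  set f : ℝ → ℝ := fun w => C w * (1 - Φ (w - (Δ + a k))) * p₁ (w - Δ)
  set g : ℝ → ℝ := fun w => C w * (1 - Φ (w - b k)) * p₁ w
  have hfi : Integrable f :=
    integrable_prod_mul_one_sub_mul hΦ.measurable hΦ0' hΦ1' (hp₁i.comp_sub_right Δ) s b _
  have hgi : Integrable g := integrable_prod_mul_one_sub_mul hΦ.measurable hΦ0' hΦ1' hp₁i s b _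
  have hC : ∀ w, 0 < C w := fun w => prod_pos fun i _ => hΦ0 _
  have hf : 0 ≤ f := fun w => mul_nonneg (mul_nonneg (hC w).le (hS _).le) (hp₁ _).le
  have hg : ∀ w, 0 < g w := fun w => mul_pos (mul_pos (hC w) (hS _)) (hp₁ w)
  have hfg : ∀ w, f w ^ α * g w ^ (1 - α) ≤ c₂ * (p₁ (w - Δ) ^ α * p₁ w ^ (1 - α)) := by
    intro w
    refine mul_mul_rpow_mul_mul_rpow_le (hC w) (prod_le_one (fun i _ => hΦ0' _) fun i _ => hΦ1' _)
      (hS _).le (hS _).le (hp₁ _).le (hp₁ _).le ((?_ : _ ≤ _).trans (hc₂ (w - b k)))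
    refine mul_le_mul_of_nonneg_right (rpow_le_rpow (hS _).le ?_ (by linarith))
      (rpow_nonneg (hS _).le _)
    exact sub_le_sub_left (hΦ (by linarith [(abs_le.1 (hab k)).2])) 1
  have hPa : aboveThresholdProb p₁ Φ s k a ≤ ∫ w, f w :=
    aboveThresholdProb_le_integral_shift (fun z => (hp₁ z).le) hp₁i hΦ hΦ0' hΦ1' s k
      fun i => by linarith [(abs_le.1 (hab i)).1]
  have hPa0 : 0 ≤ aboveThresholdProb p₁ Φ s k a := integral_nonneg fun z =>
    mul_nonneg (mul_nonneg (prod_nonneg fun i _ => hΦ0' _) (hS _).le) (hp₁ z).le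
  calc aboveThresholdProb p₁ Φ s k a ^ α * aboveThresholdProb p₁ Φ s k b ^ (1 - α)
      ≤ (∫ w, f w) ^ α * (∫ w, g w) ^ (1 - α) :=
        mul_le_mul_of_nonneg_right (rpow_le_rpow hPa0 hPa (by linarith))
          (rpow_nonneg (integral_nonneg fun w => (hg w).le) _)
    _ ≤ ∫ w, c₂ * (p₁ (w - Δ) ^ α * p₁ w ^ (1 - α)) :=
        integral_rpow_mul_integral_rpow_one_sub_le_of_le hα hf hg hfi hgi (hp₁r.const_mul c₂) hfg
    _ ≤ c₂ * c₁ := by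
        rw [integral_const_mul]
        gcongr
        exact (mul_nonneg (rpow_nonneg (hS _).le _) (rpow_nonneg (hS _).le _)).trans (hc₂ 0)

end AboveThreshold

/-- RDP bound for the Gaussian version of Noisy Backtracking
Line Search, Theorem 3 of the paper. With threshold-noise density
`p₁ = N(0, Δ²σ₁²)` and query-noise density `p₂ = N(0, Δ²σ₂²)`, for query
vectors `a, b` with `|a i − b i| ≤ Δ` coordinatewise and every output index `k`,
`P k a ^ α · P k b ^ (1−α) ≤ exp(α(α−1)(4σ₁² + σ₂²)/(2σ₁²σ₂²))`. -/
theorem noisyBTLS_gaussian_RDP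
    (K : ℕ) (Δ σ₁ σ₂ α : ℝ) (hΔ : 0 < Δ) (hσ₁ : 0 < σ₁) (hσ₂ : 0 < σ₂) (hα : 1 < α)
    (gauss : ℝ → ℝ → ℝ → ℝ)
    (hgauss : ∀ x m v : ℝ,
      gauss x m v = 1 / Real.sqrt (2 * Real.pi * v) * Real.exp (-(x - m) ^ 2 / (2 * v)))
    (p₁ p₂ : ℝ → ℝ)
    (hp₁ : ∀ z : ℝ, p₁ z = gauss z 0 (Δ ^ 2 * σ₁ ^ 2))
    (hp₂ : ∀ y : ℝ, p₂ y = gauss y 0 (Δ ^ 2 * σ₂ ^ 2))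
    (Φ₂ : ℝ → ℝ) (hΦ₂ : ∀ t : ℝ, Φ₂ t = ∫ u in Set.Iic t, p₂ u)
    (P : Fin K → (Fin K → ℝ) → ℝ)
    (hP : ∀ (k : Fin K) (a : Fin K → ℝ),
      P k a = ∫ z : ℝ,
        (∏ i ∈ Finset.univ.filter (fun i : Fin K => i < k), Φ₂ (z - a i)) *
          (1 - Φ₂ (z - a k)) * p₁ z)
    (a b : Fin K → ℝ) (hab : ∀ i : Fin K, |a i - b i| ≤ Δ) :
    ∀ k : Fin K,
      P k a ^ α * P k b ^ (1 - α) ≤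
        Real.exp (α * (α - 1) * (4 * σ₁ ^ 2 + σ₂ ^ 2) / (2 * σ₁ ^ 2 * σ₂ ^ 2)) := by
  intro k
  set v₁ : ℝ≥0 := ⟨Δ ^ 2 * σ₁ ^ 2, by positivity⟩
  set v₂ : ℝ≥0 := ⟨Δ ^ 2 * σ₂ ^ 2, by positivity⟩
  have hv₁c : (v₁ : ℝ) = Δ ^ 2 * σ₁ ^ 2 := rfl
  have hv₂c : (v₂ : ℝ) = Δ ^ 2 * σ₂ ^ 2 := rfl
  have hv₁ : v₁ ≠ 0 := by rw [← NNReal.coe_ne_zero, hv₁c]; positivity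
  have hv₂ : v₂ ≠ 0 := by rw [← NNReal.coe_ne_zero, hv₂c]; positivity
  have hp₁g : p₁ = gaussianPDFReal 0 v₁ := funext fun z => by
    rw [hp₁, hgauss, gaussianPDFReal_def, one_div]; rfl
  have hΦ : Φ₂ = fun t => ∫ u in Iic t, gaussianPDFReal 0 v₂ u := funext fun t => by
    simp only [hΦ₂, hp₂, hgauss, gaussianPDFReal_def, one_div]; rfl
  have hPk : ∀ c, P k c = aboveThresholdProb p₁ Φ₂ (univ.filter (· < k)) k c := hP k
  subst hp₁g hΦ
  have hsurv := one_sub_setIntegral_Iic_gaussianPDFReal hv₂ 0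
  rw [hPk, hPk]
  refine (aboveThresholdProb_rpow_mul_rpow_le (c₁ := exp (α * (α - 1) * Δ ^ 2 / (2 * v₁)))
    (c₂ := exp (α * (α - 1) * (2 * Δ) ^ 2 / (2 * v₂))) hα (gaussianPDFReal_pos 0 v₁ · hv₁)
    (integrable_gaussianPDFReal 0 v₁) ?_ ?_ (monotone_setIntegral_Iic_gaussianPDFReal 0)
    (fun t => setIntegral_gaussianPDFReal_pos hv₂ 0 (by simp)) ?_ ?_ _ k hab).trans_eq ?_
  · simpa only [gaussianPDFReal_sub, zero_add] using
      integrable_gaussianPDFReal_rpow_mul_rpow hv₁ α Δ 0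
  · simp only [gaussianPDFReal_sub, zero_add]
    exact (integral_gaussianPDFReal_rpow_mul_rpow hv₁ α Δ 0).trans_le (by rw [sub_zero])
  · exact fun t => sub_pos.1 (hsurv t ▸ setIntegral_gaussianPDFReal_pos hv₂ 0 (by simp))
  · intro t
    rw [hsurv, hsurv, setIntegral_Ioi_sub_gaussianPDFReal]
    simpa only [zero_add, sub_zero] using setIntegral_gaussianPDFReal_rpow_mul_rpow_le hv₂ hα _ 0 _
  · rw [← exp_add]
    congr 1
    rw [hv₁c, hv₂c]
    field_simp
    ring
end

section
/- Let p₁ and p₂ be any probability density functions on ℝ (nonnegative, measurable, integrating to 1), let Φ₂(t) = ∫_{−∞}^t p₂(u) du, let Δ > 0, let k ≥ 1, and let a₁, …, a_k, b₁, …, b_k ∈ ℝ satisfy |a_i − b_i| ≤ Δ for all i ∈ {1, …, k}. Then ∫_ℝ ∫_{ℝ^k} (∏_{i=1}^{k−1} 𝟙[a_i + y_i < z] p₂(y_i)) · 𝟙[a_k + y_k ≥ z] p₂(y_k) · p₁(z) dy₁ ⋯ dy_k dz ≤ ∫_ℝ ∫_ℝ (∏_{i=1}^{k−1} Φ₂(z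 − b_i)) · 𝟙[b_k + y ≥ z] · p₂(y − 2Δ) · p₁(z − Δ) dy dz. -/
/-!
Integrating out the query noises turns the left side into
`∫ (∏_{i<k} Φ₂(z - a i)) (1 - Φ₂(z - a k)) p₁(z) dz`, and the right side, after the substitution
`z ↦ z + Δ`, into the same integral with `Φ₂(z + Δ - b i)` and `1 - Φ₂(z - Δ - b k)`.
Since `Φ₂` is monotone and `|a i - b i| ≤ Δ`, the second integrand dominates the first pointwise.
-/

open MeasureTheory Set

noncomputable def cdfOfDensity (p : ℝ → ℝ) (t : ℝ) : ℝ := ∫ u in Iic t, p u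

theorem integral_ite_add_lt_mul (p : ℝ → ℝ) (c z : ℝ) :
    ∫ y, (if c + y < z then (1 : ℝ) else 0) * p y = cdfOfDensity p (z - c) := by
  have hind : (fun y => (if c + y < z then (1 : ℝ) else 0) * p y) = (Iio (z - c)).indicator p := by
    ext y
    simp only [indicator, mem_Iio, lt_sub_iff_add_lt', ite_mul, one_mul, zero_mul]
  rw [hind, integral_indicator measurableSet_Iio, cdfOfDensity]
  exact setIntegral_congr_set Iio_ae_eq_Iic

section cdfOfDensity

variable {p : ℝ → ℝ}

theorem cdfOfDensity_nonneg (hp0 : ∀ x, 0 ≤ p x) (t : ℝ) : 0 ≤ cdfOfDensity p t :=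
  setIntegral_nonneg measurableSet_Iic fun x _ => hp0 x

theorem cdfOfDensity_mono (hp0 : ∀ x, 0 ≤ p x) (hp : Integrable p) :
    Monotone (cdfOfDensity p) := fun _ _ hst =>
  setIntegral_mono_set hp.integrableOn (ae_of_all _ hp0) (Iic_subset_Iic.2 hst).eventuallyLE

theorem cdfOfDensity_le_one (hp0 : ∀ x, 0 ≤ p x) (hp1 : ∫ x, p x = 1) (t : ℝ) :
    cdfOfDensity p t ≤ 1 :=
  hp1 ▸ setIntegral_le_integral (integrable_of_integral_eq_one hp1) (ae_of_all _ hp0)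

theorem integral_ite_add_ge_mul (hp1 : ∫ x, p x = 1) (c z : ℝ) :
    ∫ y, (if c + y ≥ z then (1 : ℝ) else 0) * p y = 1 - cdfOfDensity p (z - c) := by
  have hp := integrable_of_integral_eq_one hp1
  have hind : (fun y => (if c + y ≥ z then (1 : ℝ) else 0) * p y) = (Ici (z - c)).indicator p := by
    ext y
    simp only [indicator, mem_Ici, sub_le_iff_le_add', ge_iff_le, ite_mul, one_mul, zero_mul]
  rw [eq_sub_iff_add_eq, hind, integral_indicator measurableSet_Ici, cdfOfDensity, add_comm,
    ← setIntegral_congr_set Ioi_ae_eq_Ici,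
    intervalIntegral.integral_Iic_add_Ioi hp.integrableOn hp.integrableOn, hp1]

theorem integral_prod_erase_mul {ι : Type*} [Fintype ι] [DecidableEq ι] (j : ι)
    (f : ι → ℝ → ℝ) (g : ℝ → ℝ) :
    ∫ y : ι → ℝ, (∏ i ∈ Finset.univ.erase j, f i (y i)) * g (y j) =
      (∏ i ∈ Finset.univ.erase j, ∫ t, f i t) * ∫ t, g t := by
  have hf : ∀ i ∈ Finset.univ.erase j, Function.update f j g i = f i :=
    fun i hi => Function.update_of_ne (Finset.ne_of_mem_erase hi) _ _
  have h := integral_fintype_prod_volume_eq_prod (Function.update f j g)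
  simp only [← Finset.prod_erase_mul _ _ (Finset.mem_univ j), Function.update_self] at h
  simpa only [fun y : ι → ℝ => Finset.prod_congr rfl fun i hi => congrFun (hf i hi) (y i),
    Finset.prod_congr rfl fun i hi => congrArg (fun φ => ∫ t, φ t) (hf i hi)] using h

theorem integral_prod_ite_lt_mul_ite_ge (hp1 : ∫ x, p x = 1) {ι : Type*} [Fintype ι]
    [DecidableEq ι] (j : ι) (a : ι → ℝ) (z : ℝ) :
    ∫ y : ι → ℝ, (∏ i ∈ Finset.univ.erase j, (if a i + y i < z then (1 : ℝ) else 0) * p (y i)) *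
        ((if a j + y j ≥ z then (1 : ℝ) else 0) * p (y j)) =
      (∏ i ∈ Finset.univ.erase j, cdfOfDensity p (z - a i)) * (1 - cdfOfDensity p (z - a j)) := by
  rw [integral_prod_erase_mul j (fun i t => (if a i + t < z then (1 : ℝ) else 0) * p t)
    fun t => (if a j + t ≥ z then (1 : ℝ) else 0) * p t]
  simp only [integral_ite_add_lt_mul, integral_ite_add_ge_mul hp1]

theorem integral_ite_add_ge_mul_sub (hp1 : ∫ x, p x = 1) (c d z : ℝ) :
    ∫ y, (if c + y ≥ z then (1 : ℝ) else 0) * p (y - d) = 1 - cdfOfDensity p (z - (c + d)) := by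
  rw [← integral_add_right_eq_self _ d, ← integral_ite_add_ge_mul hp1]
  congr 1 with y
  rw [add_sub_cancel_right, add_comm y d, add_assoc]

end cdfOfDensity

section

variable {ι : Type*} {Φ : ℝ → ℝ}

theorem prod_mul_one_sub_nonneg (h0 : ∀ t, 0 ≤ Φ t) (h1 : ∀ t, Φ t ≤ 1) (s : Finset ι)
    (u : ι → ℝ) (v : ℝ) : 0 ≤ (∏ i ∈ s, Φ (u i)) * (1 - Φ v) :=
  mul_nonneg (Finset.prod_nonneg fun _ _ => h0 _) (sub_nonneg.2 (h1 v))

theorem prod_mul_one_sub_le_one (h0 : ∀ t, 0 ≤ Φ t) (h1 : ∀ t, Φ t ≤ 1) (s : Finset ι)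
    (u : ι → ℝ) (v : ℝ) : (∏ i ∈ s, Φ (u i)) * (1 - Φ v) ≤ 1 :=
  mul_le_one₀ (Finset.prod_le_one (fun _ _ => h0 _) fun _ _ => h1 _) (sub_nonneg.2 (h1 v))
    (sub_le_self _ (h0 v))

theorem prod_mul_one_sub_le_prod_mul_one_sub (hΦ : Monotone Φ) (h0 : ∀ t, 0 ≤ Φ t)
    (h1 : ∀ t, Φ t ≤ 1) {s : Finset ι} {u u' : ι → ℝ} {v v' : ℝ} (hu : ∀ i ∈ s, u i ≤ u' i)
    (hv : v' ≤ v) : (∏ i ∈ s, Φ (u i)) * (1 - Φ v) ≤ (∏ i ∈ s, Φ (u' i)) * (1 - Φ v') :=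
  mul_le_mul (Finset.prod_le_prod (fun _ _ => h0 _) fun i hi => hΦ (hu i hi))
    (sub_le_sub_left (hΦ hv) 1) (sub_nonneg.2 (h1 v)) (Finset.prod_nonneg fun _ _ => h0 _)

end

theorem aboveThreshold_shift_inequality_general
    (n : ℕ) (Δ : ℝ)
    (p₁ p₂ : ℝ → ℝ)
    (hp₁0 : ∀ x : ℝ, 0 ≤ p₁ x) (hp₂0 : ∀ x : ℝ, 0 ≤ p₂ x)
    (hp₁int : ∫ x : ℝ, p₁ x = 1) (hp₂int : ∫ x : ℝ, p₂ x = 1)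
    (Φ₂ : ℝ → ℝ) (hΦ₂ : ∀ t : ℝ, Φ₂ t = ∫ u in Set.Iic t, p₂ u)
    (a b : Fin (n + 1) → ℝ) (hab : ∀ i : Fin (n + 1), |a i - b i| ≤ Δ) :
    (∫ z : ℝ, ∫ y : Fin (n + 1) → ℝ,
        (∏ i ∈ Finset.univ.erase (Fin.last n),
            (if a i + y i < z then (1 : ℝ) else 0) * p₂ (y i)) *
          ((if a (Fin.last n) + y (Fin.last n) ≥ z then (1 : ℝ) else 0) *
            p₂ (y (Fin.last n))) * p₁ z) ≤
      ∫ z : ℝ, ∫ y : ℝ,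
        (∏ i ∈ Finset.univ.erase (Fin.last n), Φ₂ (z - b i)) *
          (if b (Fin.last n) + y ≥ z then (1 : ℝ) else 0) *
          p₂ (y - 2 * Δ) * p₁ (z - Δ) := by
  obtain rfl : Φ₂ = cdfOfDensity p₂ := funext hΦ₂
  have hΦ0 := cdfOfDensity_nonneg hp₂0
  have hΦ1 := cdfOfDensity_le_one hp₂0 hp₂int
  have hΦ := cdfOfDensity_mono hp₂0 (integrable_of_integral_eq_one hp₂int)
  simp_rw [integral_mul_const, integral_prod_ite_lt_mul_ite_ge hp₂int, mul_assoc _ (ite _ _ _),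
    integral_const_mul, integral_ite_add_ge_mul_sub hp₂int]
  conv_rhs => rw [← integral_add_right_eq_self _ Δ]
  simp only [add_sub_cancel_right]
  refine integral_mono_of_nonneg (ae_of_all _ fun z => ?_) ?_ (ae_of_all _ fun z => ?_)
  · exact mul_nonneg (prod_mul_one_sub_nonneg hΦ0 hΦ1 _ _ _) (hp₁0 z)
  · refine (integrable_of_integral_eq_one hp₁int).bdd_mul (c := 1) ?_ (ae_of_all _ fun z => ?_)
    · have hΦm := hΦ.measurable
      fun_prop
    · rw [Real.norm_of_nonneg (prod_mul_one_sub_nonneg hΦ0 hΦ1 _ _ _)]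
      exact prod_mul_one_sub_le_one hΦ0 hΦ1 _ _ _
  · refine mul_le_mul_of_nonneg_right (prod_mul_one_sub_le_prod_mul_one_sub hΦ hΦ0 hΦ1
      (fun i _ => ?_) ?_) (hp₁0 z)
    · linarith [(abs_le.1 (hab i)).1]
    · linarith [(abs_le.1 (hab (Fin.last n))).2]

/-- the key shift inequality, formula (11) of the appendix,
used in the proofs of Theorems 2 and 3. Here the queries are indexed by
`Fin (n+1)` (so there are `k = n+1 ≥ 1` of them, the last one being
`Fin.last n`). The probability that the AboveThreshold mechanism with
threshold-noise density `p₁` and i.i.d. query-noise density `p₂` outputs the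
last index on query values `a` is bounded by the corresponding expression for
the neighboring query values `b` (with `|a i − b i| ≤ Δ`), at the cost of
shifting the threshold noise by `Δ` and the last query noise by `2Δ`. -/
theorem aboveThreshold_shift_inequality
    (n : ℕ) (Δ : ℝ) (hΔ : 0 < Δ)
    (p₁ p₂ : ℝ → ℝ) (hp₁m : Measurable p₁) (hp₂m : Measurable p₂)
    (hp₁0 : ∀ x : ℝ, 0 ≤ p₁ x) (hp₂0 : ∀ x : ℝ, 0 ≤ p₂ x)
    (hp₁int : ∫ x : ℝ, p₁ x = 1) (hp₂int : ∫ x : ℝ, p₂ x = 1)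
    (Φ₂ : ℝ → ℝ) (hΦ₂ : ∀ t : ℝ, Φ₂ t = ∫ u in Set.Iic t, p₂ u)
    (a b : Fin (n + 1) → ℝ) (hab : ∀ i : Fin (n + 1), |a i - b i| ≤ Δ) :
    (∫ z : ℝ, ∫ y : Fin (n + 1) → ℝ,
        (∏ i ∈ Finset.univ.erase (Fin.last n),
            (if a i + y i < z then (1 : ℝ) else 0) * p₂ (y i)) *
          ((if a (Fin.last n) + y (Fin.last n) ≥ z then (1 : ℝ) else 0) *
            p₂ (y (Fin.last n))) * p₁ z) ≤
      ∫ z : ℝ, ∫ y : ℝ,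
        (∏ i ∈ Finset.univ.erase (Fin.last n), Φ₂ (z - b i)) *
          (if b (Fin.last n) + y ≥ z then (1 : ℝ) else 0) *
          p₂ (y - 2 * Δ) * p₁ (z - Δ) :=
  aboveThreshold_shift_inequality_general n Δ p₁ p₂ hp₁0 hp₂0 hp₁int hp₂int Φ₂ hΦ₂ a b hab
end
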